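/- Let U = Rx(2π/3) and let M = (Rx(−2π/3) ⊗ Rx(−2π/3)) · CZ · (I₂ ⊗ Z) · (U ⊗ U), a 4×4 complex matrix indexed by pairs (a,b) ∈ {0,1}², and define the 2×2 complex matrix 𝒜 by 𝒜(y,x) = M((y,0),(x,0)) for x, y ∈ {0,1}. Then 𝒜 = (1/8)·[[5, 3√3·i], [−3√3·i, −1]], and there exists a nonzero complex scalar c such that 𝒜 = c · D; explicitly 𝒜 = (i/√2) · D. -/

import Mathlib

/-!
STATEMENT 7: For `U = Rx(2π/3)`,
`M = (Rx(−2π/3) ⊗ Rx(−2π/3)) · CZ · (I₂ ⊗ Z) · (U ⊗ U)` and `𝒜(y,x) = M((y,0),(x,0))`,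
one has `𝒜 = (1/8)·[[5, 3√3·i], [−3√3·i, −1]]` and `𝒜 = (i/√2) • D` with `i/√2 ≠ 0`.
-/

noncomputable section

open Matrix Complex Kronecker

/-- The single-qubit rotation `Rx(θ)`. -/
def Rx (θ : ℝ) : Matrix (Fin 2) (Fin 2) ℂ :=
  !![(Real.cos (θ / 2) : ℂ), -Complex.I * (Real.sin (θ / 2) : ℂ);
     -Complex.I * (Real.sin (θ / 2) : ℂ), (Real.cos (θ / 2) : ℂ)]

/-- The Pauli-Z gate. -/
def Zg : Matrix (Fin 2) (Fin 2) ℂ := !![1, 0; 0, -1]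

/-- The controlled-Z gate: diagonal `(1,1,1,-1)` on pairs `(0,0),(0,1),(1,0),(1,1)`. -/
def CZ : Matrix (Fin 2 × Fin 2) (Fin 2 × Fin 2) ℂ :=
  Matrix.diagonal (fun p => if p = (1, 1) then -1 else 1)

def D : Matrix (Fin 2) (Fin 2) ℂ :=
  ((4 * Real.sqrt 2 : ℝ) : ℂ)⁻¹ •
    !![-5 * Complex.I, 3 * (Real.sqrt 3 : ℂ);
       -3 * (Real.sqrt 3 : ℂ), Complex.I]

/-- `M = (Rx(−2π/3) ⊗ Rx(−2π/3)) · CZ · (I₂ ⊗ Z) · (Rx(2π/3) ⊗ Rx(2π/3))`. -/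
def M : Matrix (Fin 2 × Fin 2) (Fin 2 × Fin 2) ℂ :=
  (Rx (-(2 * Real.pi / 3)) ⊗ₖ Rx (-(2 * Real.pi / 3))) * CZ *
    ((1 : Matrix (Fin 2) (Fin 2) ℂ) ⊗ₖ Zg) * (Rx (2 * Real.pi / 3) ⊗ₖ Rx (2 * Real.pi / 3))

/-- The gadget action: `𝒜(y,x) = M((y,0),(x,0))`. -/
def gadA : Matrix (Fin 2) (Fin 2) ℂ := Matrix.of fun y x => M (y, 0) (x, 0)

lemma Rx_pos : Rx (2 * Real.pi / 3) =
    !![(1/2 : ℂ), -Complex.I * ((Real.sqrt 3 : ℂ)/2);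
       -Complex.I * ((Real.sqrt 3 : ℂ)/2), (1/2 : ℂ)] := by
  have h1 : (2 * Real.pi / 3) / 2 = Real.pi / 3 := by ring
  rw [Rx, h1, Real.cos_pi_div_three, Real.sin_pi_div_three]
  push_cast; ring_nf

lemma Rx_neg : Rx (-(2 * Real.pi / 3)) =
    !![(1/2 : ℂ), Complex.I * ((Real.sqrt 3 : ℂ)/2);
       Complex.I * ((Real.sqrt 3 : ℂ)/2), (1/2 : ℂ)] := by
  have h1 : (-(2 * Real.pi / 3)) / 2 = -(Real.pi / 3) := by ring
  rw [Rx, h1, Real.cos_neg, Real.sin_neg, Real.cos_pi_div_three, Real.sin_pi_div_three]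
  push_cast; ring_nf

lemma gadA_eq : gadA = (1 / 8 : ℂ) • !![5, 3 * (Real.sqrt 3 : ℂ) * Complex.I;
                            -3 * (Real.sqrt 3 : ℂ) * Complex.I, -1] := by
  have h3 : ((Real.sqrt 3 : ℝ) : ℂ) * (Real.sqrt 3 : ℂ) = 3 := by
    norm_cast; exact Real.mul_self_sqrt (by norm_num)
  have hI : Complex.I * Complex.I = -1 := Complex.I_mul_I
  ext i j
  fin_cases i <;> fin_cases j <;>
    · simp only [gadA, M, Rx_pos, Rx_neg, Matrix.of_apply, Matrix.mul_apply,
        Fintype.sum_prod_type, Fin.sum_univ_succ, Fin.sum_univ_zero,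
        kroneckerMap_apply, CZ, Zg, Matrix.diagonal_apply, Matrix.one_apply,
        Prod.mk.injEq, Matrix.smul_apply, smul_eq_mul]
      norm_num [Matrix.cons_val_zero, Matrix.cons_val_one, Matrix.head_cons]
      first
      | linear_combination (((Real.sqrt 3:ℂ))^4*(Complex.I^2-1)/16)*hI + ((((Real.sqrt 3:ℂ))^2+3)/16)*h3
      | linear_combination (-((Real.sqrt 3:ℂ))^3*Complex.I/8)*hI + (Complex.I*((Real.sqrt 3:ℂ))/8)*h3
      | linear_combination (((Real.sqrt 3:ℂ))^3*Complex.I/8)*hI + (-Complex.I*((Real.sqrt 3:ℂ))/8)*h3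
      | linear_combination (-((Real.sqrt 3:ℂ))^2/8 - ((Real.sqrt 3:ℂ))^4*(Complex.I^2-1)/16)*hI + (-(((Real.sqrt 3:ℂ))^2+1)/16)*h3

theorem stmt7 :
    gadA = (1 / 8 : ℂ) • !![5, 3 * (Real.sqrt 3 : ℂ) * Complex.I;
                            -3 * (Real.sqrt 3 : ℂ) * Complex.I, -1] ∧
      (∃ c : ℂ, c ≠ 0 ∧ gadA = c • D) ∧
      gadA = (Complex.I / (Real.sqrt 2 : ℂ)) • D := by
  have h2 : ((Real.sqrt 2 : ℝ) : ℂ) * (Real.sqrt 2 : ℂ) = 2 := by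
    norm_cast; exact Real.mul_self_sqrt (by norm_num)
  have hne : ((Real.sqrt 2 : ℝ) : ℂ) ≠ 0 := by
    norm_cast; positivity
  have hc : (Complex.I / (Real.sqrt 2 : ℂ)) ≠ 0 :=
    div_ne_zero Complex.I_ne_zero hne
  have hI : Complex.I * Complex.I = -1 := Complex.I_mul_I
  have key : gadA = (Complex.I / (Real.sqrt 2 : ℂ)) • D := by
    rw [gadA_eq, D]
    ext i j
    fin_cases i <;> fin_cases j <;>
      · simp only [Matrix.smul_apply, smul_eq_mul, Matrix.cons_val_zero,
          Matrix.cons_val_one, Matrix.head_cons, Matrix.cons_val', Matrix.empty_val',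
          Matrix.cons_val_fin_one, Matrix.head_fin_const, Matrix.of_apply]
        push_cast
        field_simp
        first
        | linear_combination (40:ℂ)*hI + 20*h2
        | linear_combination (12*(Real.sqrt 3:ℂ)*Complex.I)*h2
        | linear_combination (4:ℂ)*h2
        | linear_combination (8:ℂ)*hI + 4*h2
        | linear_combination (-4:ℂ)*h2
        | linear_combination (-4:ℂ)*h2 - 8*hI
  exact ⟨gadA_eq, ⟨_, hc, key⟩, key⟩
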